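/- (Asymptotic true positive rate above the signal strength.) Fix 0 < β < 1 and 0 < r < q. In the ARW model, TPR(t_p(q)) / ( (1/√(2π)) · p^{−β−(√q−√r)²} / ((√q−√r)·√(2·log p)) ) → 1 as p → ∞, where TPR is computed with ε = ε_p = p^{−β}, τ = τ_p = √(2r log p). -/

import Mathlib

open Filter Set MeasureTheory

noncomputable def gaussPDF (t : ℝ) : ℝ := (Real.sqrt (2 * Real.pi))⁻¹ * Real.exp (-(t ^ 2) / 2)

/-- standard normal CDF Φ -/
noncomputable def normCDF (t : ℝ) : ℝ := ∫ x in Set.Iic t, gaussPDF x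

/-- survival function of |N(τ,1)| -/
noncomputable def psiBar (τ t : ℝ) : ℝ := (1 - normCDF (t - τ)) + normCDF (-t - τ)

noncomputable def tprFn (ε τ t : ℝ) : ℝ := ε * psiBar τ t

noncomputable def fprFn (ε t : ℝ) : ℝ := (1 - ε) * psiBar 0 t

noncomputable def idrFn (ε τ t : ℝ) : ℝ := ε * normCDF (-t - τ)

/-- clipping proxy separation -/
noncomputable def sepFn (ε τ t : ℝ) : ℝ :=
  2 * τ * (tprFn ε τ t - 2 * idrFn ε τ t) / Real.sqrt (tprFn ε τ t + fprFn ε t)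

/-- proxy false discovery rate -/
noncomputable def fdrFn (ε τ t : ℝ) : ℝ := fprFn ε t / (tprFn ε τ t + fprFn ε t)

/-- magnitude of derivative of TPR -/
noncomputable def tprD (ε τ t : ℝ) : ℝ := ε * (gaussPDF (t - τ) + gaussPDF (t + τ))

/-- magnitude of derivative of FPR -/
noncomputable def fprD (ε t : ℝ) : ℝ := 2 * (1 - ε) * gaussPDF t

/-- proxy local false discovery rate -/
noncomputable def lfdrFn (ε τ t : ℝ) : ℝ := fprD ε t / (tprD ε τ t + fprD ε t)

noncomputable def rhoStar (β : ℝ) : ℝ :=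
  if β ≤ 1 / 2 then 0 else if β ≤ 3 / 4 then β - 1 / 2 else (1 - Real.sqrt (1 - β)) ^ 2

noncomputable def qStar (r β : ℝ) : ℝ := if r ≤ β / 3 then 4 * r else (β + r) ^ 2 / (4 * r)

/-- sparsity ε_p = p^{-β} in the ARW model -/
noncomputable def epsP (β : ℝ) (p : ℕ) : ℝ := (p : ℝ) ^ (-β)

/-- strength τ_p = √(2 r log p) in the ARW model -/
noncomputable def tauP (r : ℝ) (p : ℕ) : ℝ := Real.sqrt (2 * r * Real.log p)

/-- threshold t_p(q) = √(2 q log p) -/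
noncomputable def tP (q : ℝ) (p : ℕ) : ℝ := Real.sqrt (2 * q * Real.log p)

/-- folded two-point mixture G_{ε,τ} -/
noncomputable def gMix (ε τ t : ℝ) : ℝ :=
  (1 - ε) * (normCDF t - normCDF (-t)) + ε * (normCDF (t - τ) - normCDF (-t - τ))

/-- ideal HC objective -/
noncomputable def hcObj (ε τ t : ℝ) : ℝ :=
  ((1 - gMix ε τ t) - psiBar 0 t) / Real.sqrt (gMix ε τ t * (1 - gMix ε τ t))

/-- useful feature discovery exponent δ(q) -/
noncomputable def deltaExp (β r q : ℝ) : ℝ :=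
  if q ≤ r then 1 - β else 1 - β - (Real.sqrt q - Real.sqrt r) ^ 2

/-- separation growth exponent γ(q) -/
noncomputable def gammaExp (β r q : ℝ) : ℝ :=
  deltaExp β r q - max (1 - q) (deltaExp β r q) / 2

/-!
Write `x = t - τ = (√q - √r)√(2 log p)`; then `t + τ = c x` with `c = (√q + √r)/(√q - √r) > 1`,
so `TPR = ε (Φ̄(x) + Φ̄(c x))` while the normalizer is exactly `ε φ(x) / x`. Integrating by parts
gives `φ(x)/x - φ(x)/x³ ≤ Φ̄(x) ≤ φ(x)/x`, hence Mills' ratio `Φ̄(x) ~ φ(x)/x`, which accounts for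
the first term; the second is at most `φ(c x) / φ(x) ≤ exp(-(c - 1) x²) → 0` times the normalizer.
-/

open Real Topology

lemma gaussPDF_eq_gaussianPDFReal : gaussPDF = ProbabilityTheory.gaussianPDFReal 0 1 := by
  ext t
  simp [gaussPDF, ProbabilityTheory.gaussianPDFReal]

lemma gaussPDF_pos (t : ℝ) : 0 < gaussPDF t := by
  unfold gaussPDF
  positivity

lemma continuous_gaussPDF : Continuous gaussPDF := by
  unfold gaussPDF
  fun_prop

lemma integrable_gaussPDF : Integrable gaussPDF := by
  rw [gaussPDF_eq_gaussianPDFReal]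
  exact ProbabilityTheory.integrable_gaussianPDFReal 0 1

lemma hasDerivAt_gaussPDF (t : ℝ) : HasDerivAt gaussPDF (-t * gaussPDF t) t := by
  have h : HasDerivAt (fun t : ℝ => -(t ^ 2) / 2) (-t) t :=
    ((hasDerivAt_pow 2 t).neg.div_const 2).congr_deriv (by norm_num; ring)
  unfold gaussPDF
  exact (h.exp.const_mul _).congr_deriv (by ring)

lemma tendsto_gaussPDF_atTop : Tendsto gaussPDF atTop (𝓝 0) := by
  have h : Tendsto (fun t : ℝ => -(t ^ 2) / 2) atTop atBot :=
    (tendsto_neg_atTop_atBot.comp (tendsto_pow_atTop two_ne_zero)).atBot_div_const two_pos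
  unfold gaussPDF
  simpa using (tendsto_exp_atBot.comp h).const_mul (√(2 * π))⁻¹

lemma gaussPDF_add (x d : ℝ) : gaussPDF (x + d) = gaussPDF x * exp (-(d * x) - d ^ 2 / 2) := by
  simp only [gaussPDF, mul_assoc, ← exp_add]
  ring_nf

/-- The upper tail `1 - Φ x` of the standard normal distribution. -/
noncomputable def gaussTail (x : ℝ) : ℝ := ∫ t in Ioi x, gaussPDF t

lemma gaussTail_nonneg (x : ℝ) : 0 ≤ gaussTail x :=
  setIntegral_nonneg measurableSet_Ioi fun t _ => (gaussPDF_pos t).le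

lemma one_sub_normCDF (x : ℝ) : 1 - normCDF x = gaussTail x := by
  have h := intervalIntegral.integral_Iic_add_Ioi (b := x) integrable_gaussPDF.integrableOn
    integrable_gaussPDF.integrableOn
  rw [gaussPDF_eq_gaussianPDFReal, ProbabilityTheory.integral_gaussianPDFReal_eq_one 0 one_ne_zero]
    at h
  rw [normCDF, gaussTail, gaussPDF_eq_gaussianPDFReal]
  linarith

lemma normCDF_neg (x : ℝ) : normCDF (-x) = gaussTail x := by
  rw [normCDF, gaussTail, ← integral_comp_neg_Ioi]
  simp [gaussPDF]

lemma psiBar_eq_gaussTail (τ t : ℝ) : psiBar τ t = gaussTail (t - τ) + gaussTail (t + τ) := by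
  rw [psiBar, one_sub_normCDF, show -t - τ = -(t + τ) by ring, normCDF_neg]

section TailBounds

variable {x : ℝ}

lemma integrableOn_gaussPDF_div_pow (hx : 0 < x) (k : ℕ) :
    IntegrableOn (fun t => gaussPDF t / t ^ k) (Ioi x) := by
  refine (integrable_gaussPDF.integrableOn.div_const (x ^ k)).mono' ?_ ?_
  · exact (continuous_gaussPDF.measurable.div (measurable_id.pow_const k)).aestronglyMeasurable
  · refine (ae_restrict_iff' measurableSet_Ioi).2 (Eventually.of_forall fun t ht => ?_)
    have ht0 : 0 < t := hx.trans ht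
    rw [norm_div, norm_of_nonneg (gaussPDF_pos t).le, norm_of_nonneg (by positivity)]
    exact div_le_div_of_nonneg_left (gaussPDF_pos t).le (by positivity)
      (pow_le_pow_left₀ hx.le ht.out.le k)

/-- `-gaussPDF t / t ^ (k + 1)` is an antiderivative of the integrand on the left. -/
lemma integral_Ioi_gaussPDF_div_pow_add (hx : 0 < x) (k : ℕ) :
    (∫ t in Ioi x, gaussPDF t / t ^ k) + (k + 1) * ∫ t in Ioi x, gaussPDF t / t ^ (k + 2) =
      gaussPDF x / x ^ (k + 1) := by
  have hderiv : ∀ t ∈ Ioi x, HasDerivAt (fun t => -(gaussPDF t / t ^ (k + 1)))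
      (gaussPDF t / t ^ k + (k + 1) * (gaussPDF t / t ^ (k + 2))) t := by
    intro t ht
    have ht0 : t ≠ 0 := (hx.trans ht).ne'
    refine ((hasDerivAt_gaussPDF t).div (hasDerivAt_pow (k + 1) t)
      (pow_ne_zero _ ht0)).neg.congr_deriv ?_
    rw [Nat.add_sub_cancel]
    field_simp
    push_cast
    ring
  have hlim : Tendsto (fun t => -(gaussPDF t / t ^ (k + 1))) atTop (𝓝 0) := by
    simpa [div_eq_mul_inv] using
      (tendsto_gaussPDF_atTop.mul (tendsto_pow_atTop (Nat.succ_ne_zero k)).inv_tendsto_atTop).neg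
  have hcont : ContinuousWithinAt (fun t => -(gaussPDF t / t ^ (k + 1))) (Ici x) x :=
    ((continuous_gaussPDF.continuousAt.div (continuousAt_id.pow _)
      (pow_ne_zero _ hx.ne')).neg).continuousWithinAt
  have hint := (integrableOn_gaussPDF_div_pow hx (k + 2)).const_mul ((k : ℝ) + 1)
  rw [← integral_const_mul, ← integral_add (integrableOn_gaussPDF_div_pow hx k) hint,
    integral_Ioi_of_hasDerivAt_of_tendsto hcont hderiv
      ((integrableOn_gaussPDF_div_pow hx k).add hint) hlim]
  ring

lemma integral_Ioi_gaussPDF_div_pow_nonneg (k : ℕ) (hx : 0 < x) :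
    0 ≤ ∫ t in Ioi x, gaussPDF t / t ^ k :=
  setIntegral_nonneg measurableSet_Ioi fun t ht =>
    div_nonneg (gaussPDF_pos t).le (pow_nonneg (hx.trans ht).le k)

lemma gaussTail_le (hx : 0 < x) : gaussTail x ≤ gaussPDF x / x := by
  have h := integral_Ioi_gaussPDF_div_pow_add hx 0
  norm_num at h
  rw [gaussTail]
  linarith [integral_Ioi_gaussPDF_div_pow_nonneg 2 hx]

lemma le_gaussTail (hx : 0 < x) : gaussPDF x / x - gaussPDF x / x ^ 3 ≤ gaussTail x := by
  have h0 := integral_Ioi_gaussPDF_div_pow_add hx 0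
  have h2 := integral_Ioi_gaussPDF_div_pow_add hx 2
  norm_num at h0 h2
  rw [gaussTail]
  linarith [integral_Ioi_gaussPDF_div_pow_nonneg 4 hx]

end TailBounds

lemma tendsto_gaussTail_mul_div_gaussPDF :
    Tendsto (fun x => gaussTail x * x / gaussPDF x) atTop (𝓝 1) := by
  have hlow : Tendsto (fun x : ℝ => 1 - (x ^ 2)⁻¹) atTop (𝓝 1) := by
    have h : Tendsto (fun x : ℝ => x ^ 2) atTop atTop := tendsto_pow_atTop two_ne_zero
    simpa using tendsto_const_nhds.sub h.inv_tendsto_atTop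
  refine tendsto_of_tendsto_of_tendsto_of_le_of_le' hlow tendsto_const_nhds ?_ ?_
  · filter_upwards [eventually_gt_atTop 0] with x hx
    rw [le_div_iff₀ (gaussPDF_pos x)]
    calc (1 - (x ^ 2)⁻¹) * gaussPDF x = (gaussPDF x / x - gaussPDF x / x ^ 3) * x := by
          field_simp
      _ ≤ gaussTail x * x := by gcongr; exact le_gaussTail hx
  · filter_upwards [eventually_gt_atTop 0] with x hx
    rw [div_le_one (gaussPDF_pos x)]
    calc gaussTail x * x ≤ gaussPDF x / x * x := by gcongr; exact gaussTail_le hx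
      _ = gaussPDF x := by field_simp

lemma gaussTail_add_mul_div_gaussPDF_le {x d : ℝ} (hx : 0 < x) (hd : 0 ≤ d) :
    gaussTail (x + d) * x / gaussPDF x ≤ exp (-(d * x)) := by
  rw [div_le_iff₀ (gaussPDF_pos x)]
  calc gaussTail (x + d) * x ≤ gaussPDF (x + d) / (x + d) * x := by
        gcongr; exact gaussTail_le (by positivity)
    _ ≤ gaussPDF (x + d) := by
        rw [div_mul_eq_mul_div, div_le_iff₀ (by positivity)]
        exact mul_le_mul_of_nonneg_left (by linarith) (gaussPDF_pos _).le
    _ ≤ exp (-(d * x)) * gaussPDF x := by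
        rw [gaussPDF_add, mul_comm (exp (-(d * x)))]
        exact mul_le_mul_of_nonneg_left (exp_le_exp.2 (by nlinarith)) (gaussPDF_pos x).le

lemma tendsto_gaussTail_mul_mul_div_gaussPDF {c : ℝ} (hc : 1 < c) :
    Tendsto (fun x => gaussTail (c * x) * x / gaussPDF x) atTop (𝓝 0) := by
  have hexp : Tendsto (fun x : ℝ => exp (-((c - 1) * x * x))) atTop (𝓝 0) := by
    refine tendsto_exp_atBot.comp (tendsto_neg_atTop_atBot.comp ?_)
    simpa [mul_assoc] using
      (tendsto_id.atTop_mul_atTop₀ tendsto_id).const_mul_atTop (sub_pos.2 hc)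
  refine tendsto_of_tendsto_of_tendsto_of_le_of_le' tendsto_const_nhds hexp ?_ ?_
  · filter_upwards [eventually_gt_atTop 0] with x hx
    exact div_nonneg (mul_nonneg (gaussTail_nonneg _) hx.le) (gaussPDF_pos x).le
  · filter_upwards [eventually_gt_atTop 0] with x hx
    have h := gaussTail_add_mul_div_gaussPDF_le hx (d := (c - 1) * x) (by nlinarith)
    rwa [show x + (c - 1) * x = c * x by ring] at h

lemma tendsto_gaussTail_add_gaussTail_mul_mul_div_gaussPDF {c : ℝ} (hc : 1 < c) :
    Tendsto (fun x => (gaussTail x + gaussTail (c * x)) * x / gaussPDF x) atTop (𝓝 1) := by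
  simpa [add_mul, add_div] using
    tendsto_gaussTail_mul_div_gaussPDF.add (tendsto_gaussTail_mul_mul_div_gaussPDF hc)

lemma tP_eq_sqrt_mul_sqrt {q : ℝ} (hq : 0 ≤ q) (p : ℕ) : tP q p = √q * √(2 * log p) := by
  rw [tP, ← Real.sqrt_mul hq]
  ring_nf

lemma gaussPDF_mul_sqrt_two_mul_log (a : ℝ) {y : ℝ} (hy : 1 ≤ y) :
    gaussPDF (a * √(2 * log y)) = (√(2 * π))⁻¹ * y ^ (-a ^ 2) := by
  rw [gaussPDF, rpow_def_of_pos (by linarith), mul_pow, sq_sqrt (by linarith [log_nonneg hy])]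
  ring_nf

theorem stmt14_general (β r q : ℝ) (hr : 0 < r) (hq : r < q) :
    Filter.Tendsto
      (fun p : ℕ =>
        tprFn (epsP β p) (tauP r p) (tP q p) /
          ((Real.sqrt (2 * Real.pi))⁻¹ * (p : ℝ) ^ (-β - (Real.sqrt q - Real.sqrt r) ^ 2) /
            ((Real.sqrt q - Real.sqrt r) * Real.sqrt (2 * Real.log p))))
      Filter.atTop (nhds 1) := by
  set s := √q - √r
  have hs : 0 < s := sub_pos.2 (Real.sqrt_lt_sqrt hr.le hq)
  have hc : 1 < (√q + √r) / s := by
    rw [one_lt_div hs]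
    linarith [Real.sqrt_pos.2 hr]
  have hscale : Tendsto (fun p : ℕ => s * √(2 * log p)) atTop atTop :=
    (tendsto_sqrt_atTop.comp ((tendsto_log_atTop.comp tendsto_natCast_atTop_atTop).const_mul_atTop
      two_pos)).const_mul_atTop hs
  refine ((tendsto_gaussTail_add_gaussTail_mul_mul_div_gaussPDF hc).comp hscale).congr' ?_
  filter_upwards [eventually_ge_atTop 1] with p hp
  have hp1 : (1 : ℝ) ≤ p := by exact_mod_cast hp
  have htq : tP q p = √q * √(2 * log p) := tP_eq_sqrt_mul_sqrt (hr.trans hq).le p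
  have htr : tauP r p = √r * √(2 * log p) := tP_eq_sqrt_mul_sqrt hr.le p
  have hsub : tP q p - tauP r p = s * √(2 * log p) := by
    rw [htq, htr]
    ring
  have hadd : tP q p + tauP r p = (√q + √r) / s * (s * √(2 * log p)) := by
    rw [htq, htr]
    field_simp
  have hden : (√(2 * π))⁻¹ * (p : ℝ) ^ (-β - s ^ 2) =
      epsP β p * gaussPDF (s * √(2 * log p)) := by
    rw [gaussPDF_mul_sqrt_two_mul_log s hp1, epsP, sub_eq_add_neg, rpow_add (by linarith)]
    ring
  have hε : 0 < epsP β p := rpow_pos_of_pos (by linarith) _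
  have hφ := gaussPDF_pos (s * √(2 * log p))
  simp only [Function.comp, tprFn, psiBar_eq_gaussTail, hsub, hadd, hden]
  field_simp

/-- Asymptotic true positive rate above the signal strength (q > r). -/
theorem stmt14 (β r q : ℝ) (hβ1 : 0 < β) (hβ2 : β < 1) (hr : 0 < r) (hq : r < q) :
    Filter.Tendsto
      (fun p : ℕ =>
        tprFn (epsP β p) (tauP r p) (tP q p) /
          ((Real.sqrt (2 * Real.pi))⁻¹ * (p : ℝ) ^ (-β - (Real.sqrt q - Real.sqrt r) ^ 2) /
            ((Real.sqrt q - Real.sqrt r) * Real.sqrt (2 * Real.log p))))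
      Filter.atTop (nhds 1) :=
  stmt14_general β r q hr hq
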